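/- arXiv:1802.06000 — 4 statements merged into one kernel-verified Lean document; each statement's English description precedes it below -/
import Mathlib

section
/- Let N ≥ 1 and let w, u : ℤ → ℂ satisfy ∑_{m∈ℤ} |w(m)| < ∞ and ∑_{m∈ℤ} |u(m)| < ∞, with w(m) ≥ 0 real, and assume that for every r ∈ {0,…,N−1} the aliased sum W(r) = ∑_{s∈ℤ} w(r + sN) is nonzero. Define the N×N matrices G_{jp} = ∑_{m∈ℤ} w(m) e^{2πim(j−p)/N} and H_{jp} = ∑_{m∈ℤ} u(m) e^{2πim(j−p)/N}. Then G is invertible, and the transport matrix T = H · G⁻¹ has entries T_{jp} = (1/N) ∑_{r=0}^{N−1} ( U(r) / W(r) ) e^{2πi r (j−p)/N}, where U(r) = ∑_{s∈ℤ} u(r + sN). -/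
/-!
Both `G` and `H` are Toeplitz matrices `(j, p) ↦ ∑ₘ f(m) e^{2πim(j-p)/N}` whose exponential factor depends on `m`
only modulo `N`. Folding the series over the residue classes mod `N` writes them as
`F · diag(N W) · F⁻¹` and `F · diag(N U) · F⁻¹`, where `F` is the DFT matrix
`F j r = e^{2πijr/N}`; orthogonality of the characters of `ℤ/Nℤ` gives `F⁻¹ = N⁻¹ Fᴴ`.
Hence `G` is invertible as soon as no `W r` vanishes, and `H G⁻¹ = F · diag(U / W) · F⁻¹`.
-/

open Matrix Finset

lemma tsum_int_eq_sum_fin_tsum {R : Type*} [AddCommGroup R] [UniformSpace R] [IsUniformAddGroup R]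
    [CompleteSpace R] [T0Space R] {f : ℤ → R} (hf : Summable f) (N : ℕ) [NeZero N] :
    ∑' m, f m = ∑ r : Fin N, ∑' s : ℤ, f (r + s * N) := by
  let φ : Fin N × ℤ ≃ ℤ := (Equiv.prodComm _ _).trans (Int.divModEquiv N).symm
  have hφ (q : Fin N × ℤ) : φ q = q.1 + q.2 * N := add_comm _ _
  rw [← φ.tsum_eq, Summable.tsum_prod, tsum_fintype]
  · simp only [hφ]
  · exact hf.comp_injective φ.injective

namespace ZMod
variable {N : ℕ} [NeZero N]

lemma natCast_fin_bijective : Function.Bijective fun j : Fin N => ((j : ℕ) : ZMod N) := by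
  refine (Fintype.bijective_iff_injective_and_card _).mpr ⟨fun a b hab => ?_, by simp⟩
  simpa [val_cast_of_lt a.isLt, val_cast_of_lt b.isLt, Fin.ext_iff] using congrArg val hab

lemma sum_fin_stdAddChar_mul (x : ZMod N) :
    ∑ j : Fin N, stdAddChar ((j : ℕ) * x : ZMod N) = if x = 0 then (N : ℂ) else 0 := by
  rw [Fintype.sum_bijective _ natCast_fin_bijective _ (fun y => stdAddChar (y * x)) fun _ => rfl,
    AddChar.sum_mulShift x (isPrimitive_stdAddChar N), ZMod.card, Nat.cast_ite, Nat.cast_zero]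

lemma tsum_mul_stdAddChar_eq_sum_fin {f : ℤ → ℂ} (hf : Summable (‖f ·‖)) (x : ZMod N) :
    ∑' m : ℤ, f m * stdAddChar ((m : ZMod N) * x) =
      ∑ r : Fin N, (∑' s : ℤ, f (r + s * N)) * stdAddChar (((r : ℕ) : ZMod N) * x) := by
  have hfx : Summable fun m : ℤ => f m * stdAddChar ((m : ZMod N) * x) :=
    .of_norm (by simpa [stdAddChar_apply, Circle.norm_coe] using hf)
  rw [tsum_int_eq_sum_fin_tsum hfx N]
  refine Finset.sum_congr rfl fun r _ => ?_
  simp only [Int.cast_add, Int.cast_mul, Int.cast_natCast, natCast_self, mul_zero, add_zero]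
  exact tsum_mul_right

end ZMod

section ConjDiagonal
variable {n K : Type*} [Fintype n] [DecidableEq n] [Field K] {P : Matrix n n K}
  {b : n → K}

lemma inv_diagonal_of_ne_zero (hb : ∀ i, b i ≠ 0) : (diagonal b)⁻¹ = diagonal b⁻¹ :=
  inv_eq_left_inv <| by
    rw [diagonal_mul_diagonal, ← diagonal_one]
    exact congrArg diagonal (funext fun i => inv_mul_cancel₀ (hb i))

lemma isUnit_det_conj_diagonal (hP : IsUnit P.det) (hb : ∀ i, b i ≠ 0) :
    IsUnit (P * diagonal b * P⁻¹).det := by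
  rw [det_conj ((isUnit_iff_isUnit_det P).mpr hP), det_diagonal]
  exact (prod_ne_zero_iff.mpr fun i _ => hb i).isUnit

lemma conj_diagonal_mul_inv_conj_diagonal (hP : IsUnit P.det) (a : n → K) (hb : ∀ i, b i ≠ 0) :
    P * diagonal a * P⁻¹ * (P * diagonal b * P⁻¹)⁻¹ = P * diagonal (a / b) * P⁻¹ := by
  have hab : diagonal (a / b) = diagonal a * diagonal b⁻¹ := by
    rw [diagonal_mul_diagonal, div_eq_mul_inv]
    rfl
  rw [Matrix.mul_inv_rev, Matrix.mul_inv_rev, nonsing_inv_nonsing_inv P hP,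
    inv_diagonal_of_ne_zero hb, hab]
  simp only [Matrix.mul_assoc, nonsing_inv_mul_cancel_left P _ hP]

end ConjDiagonal

open Complex ZMod

section DFT
variable {N : ℕ} [NeZero N]

noncomputable def dftMatrix (N : ℕ) [NeZero N] : Matrix (Fin N) (Fin N) ℂ :=
  of fun j r => stdAddChar (((j : ℕ) : ZMod N) * ((r : ℕ) : ZMod N))

lemma conjTranspose_dftMatrix_mul_self : (dftMatrix N)ᴴ * dftMatrix N = (N : ℂ) • 1 := by
  ext r r'
  simp only [mul_apply, conjTranspose_apply, dftMatrix, of_apply, RCLike.star_def,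
    ← AddChar.map_neg_eq_conj, ← AddChar.map_add_eq_mul]
  have hfactor (x y z : ZMod N) : -(x * y) + x * z = x * (z - y) := by ring
  rw [sum_congr rfl fun j _ => congrArg stdAddChar (hfactor _ _ _), sum_fin_stdAddChar_mul]
  simp [sub_eq_zero, natCast_fin_bijective.injective.eq_iff, Matrix.one_apply, eq_comm]

lemma inv_natCast_smul_conjTranspose_dftMatrix_mul_self :
    ((N : ℂ)⁻¹ • (dftMatrix N)ᴴ) * dftMatrix N = 1 := by
  rw [Matrix.smul_mul, conjTranspose_dftMatrix_mul_self, smul_smul,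
    inv_mul_cancel₀ (NeZero.ne (N : ℂ)), one_smul]

lemma isUnit_det_dftMatrix : IsUnit (dftMatrix N).det :=
  isUnit_det_of_left_inverse inv_natCast_smul_conjTranspose_dftMatrix_mul_self

lemma inv_dftMatrix : (dftMatrix N)⁻¹ = (N : ℂ)⁻¹ • (dftMatrix N)ᴴ :=
  inv_eq_left_inv inv_natCast_smul_conjTranspose_dftMatrix_mul_self

lemma dftMatrix_mul_diagonal_mul_inv_apply (a : Fin N → ℂ) (j p : Fin N) :
    (dftMatrix N * diagonal a * (dftMatrix N)⁻¹) j p = (N : ℂ)⁻¹ * ∑ r : Fin N,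
      a r * stdAddChar (((r : ℕ) : ZMod N) * (((j : ℕ) : ZMod N) - ((p : ℕ) : ZMod N))) := by
  rw [inv_dftMatrix, Matrix.mul_smul, Matrix.smul_apply, smul_eq_mul, mul_apply]
  simp only [mul_diagonal, conjTranspose_apply, dftMatrix, of_apply, RCLike.star_def,
    ← AddChar.map_neg_eq_conj]
  congr 1
  refine sum_congr rfl fun r _ => ?_
  rw [mul_right_comm, mul_comm, ← AddChar.map_add_eq_mul]
  ring_nf

lemma exp_eq_stdAddChar (k l : ℤ) :
    exp (2 * Real.pi * I * k * l / N) = stdAddChar ((k : ZMod N) * (l : ZMod N)) := by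
  rw [← Int.cast_mul, stdAddChar_coe]
  push_cast
  ring_nf

lemma of_tsum_mul_exp_eq_dftMatrix_conj {f : ℤ → ℂ} (hf : Summable (‖f ·‖)) :
    (of fun j p : Fin N => ∑' m : ℤ, f m * exp (2 * Real.pi * I * m * ((j : ℤ) - (p : ℤ)) / N)) =
      dftMatrix N * diagonal (fun r : Fin N => N * ∑' s : ℤ, f (((r : ℕ) : ℤ) + s * N)) *
        (dftMatrix N)⁻¹ := by
  ext j p
  simp only [of_apply, ← Int.cast_sub, exp_eq_stdAddChar]
  simp only [dftMatrix_mul_diagonal_mul_inv_apply, mul_assoc, ← mul_sum,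
    inv_mul_cancel_left₀ (NeZero.ne (N : ℂ))]
  push_cast
  exact tsum_mul_stdAddChar_eq_sum_fin hf _

end DFT

theorem ifd_transport_operator_dft_form_general
    (N : ℕ) (hN : 1 ≤ N)
    (w : ℤ → ℝ) (hw : Summable fun m => |w m|)
    (u : ℤ → ℂ) (hu : Summable fun m => ‖u m‖)
    (hW : ∀ r ∈ Finset.range N, (∑' s : ℤ, w ((r : ℤ) + s * N)) ≠ 0)
    (G H : Matrix (Fin N) (Fin N) ℂ)
    (hG : G = Matrix.of fun j p : Fin N =>
      ∑' m : ℤ, (w m : ℂ) *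
        Complex.exp (2 * Real.pi * Complex.I * m * ((j : ℤ) - (p : ℤ)) / N))
    (hH : H = Matrix.of fun j p : Fin N =>
      ∑' m : ℤ, u m *
        Complex.exp (2 * Real.pi * Complex.I * m * ((j : ℤ) - (p : ℤ)) / N)) :
    IsUnit G.det ∧
      H * G⁻¹ = Matrix.of fun j p : Fin N =>
        (N : ℂ)⁻¹ * ∑ r ∈ Finset.range N,
          ((∑' s : ℤ, u ((r : ℤ) + s * N)) / ((∑' s : ℤ, w ((r : ℤ) + s * N) : ℝ) : ℂ)) *
            Complex.exp (2 * Real.pi * Complex.I * r * ((j : ℤ) - (p : ℤ)) / N) := by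
  have : NeZero N := ⟨by omega⟩
  have hN₀ : (N : ℂ) ≠ 0 := NeZero.ne _
  have hNW (r : Fin N) : (N : ℂ) * ∑' s : ℤ, (w (((r : ℕ) : ℤ) + s * N) : ℂ) ≠ 0 := by
    rw [← ofReal_tsum]
    exact mul_ne_zero hN₀ (ofReal_ne_zero.mpr (hW r (mem_range.mpr r.isLt)))
  subst hG hH
  rw [of_tsum_mul_exp_eq_dftMatrix_conj (by simpa using hw), of_tsum_mul_exp_eq_dftMatrix_conj hu]
  refine ⟨isUnit_det_conj_diagonal isUnit_det_dftMatrix hNW, ?_⟩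
  rw [conj_diagonal_mul_inv_conj_diagonal isUnit_det_dftMatrix _ hNW]
  ext j p
  rw [dftMatrix_mul_diagonal_mul_inv_apply, of_apply, ← Fin.sum_univ_eq_sum_range]
  refine congrArg _ (sum_congr rfl fun r _ => ?_)
  rw [Pi.div_apply, mul_div_mul_left _ _ hN₀, ofReal_tsum]
  congr 1
  simpa using (exp_eq_stdAddChar (N := N) r (j - p)).symm

/-- **Momentum-space form of the translation-invariant IFD transport operator.**
With `G_{jp} = ∑_m w(m) e^{2πim(j−p)/N}` (from `w = Φ|B̂|²`) and
`H_{jp} = ∑_m u(m) e^{2πim(j−p)/N}` (from `u = ŪΦ|B̂|²`), if the aliased sums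
`W(r) = ∑_s w(r+sN)` are all nonzero, then `G` is invertible and the transport
operator `T = H G⁻¹` has entries
`T_{jp} = (1/N) ∑_{r<N} (U(r)/W(r)) e^{2πir(j−p)/N}` where `U(r) = ∑_s u(r+sN)`. -/
theorem ifd_transport_operator_dft_form
    (N : ℕ) (hN : 1 ≤ N)
    (w : ℤ → ℝ) (hw0 : ∀ m, 0 ≤ w m) (hw : Summable fun m => |w m|)
    (u : ℤ → ℂ) (hu : Summable fun m => ‖u m‖)
    (hW : ∀ r ∈ Finset.range N, (∑' s : ℤ, w ((r : ℤ) + s * N)) ≠ 0)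
    (G H : Matrix (Fin N) (Fin N) ℂ)
    (hG : G = Matrix.of fun j p : Fin N =>
      ∑' m : ℤ, (w m : ℂ) *
        Complex.exp (2 * Real.pi * Complex.I * m * ((j : ℤ) - (p : ℤ)) / N))
    (hH : H = Matrix.of fun j p : Fin N =>
      ∑' m : ℤ, u m *
        Complex.exp (2 * Real.pi * Complex.I * m * ((j : ℤ) - (p : ℤ)) / N)) :
    IsUnit G.det ∧
      H * G⁻¹ = Matrix.of fun j p : Fin N =>
        (N : ℂ)⁻¹ * ∑ r ∈ Finset.range N,
          ((∑' s : ℤ, u ((r : ℤ) + s * N)) / ((∑' s : ℤ, w ((r : ℤ) + s * N) : ℝ) : ℂ)) *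
            Complex.exp (2 * Real.pi * Complex.I * r * ((j : ℤ) - (p : ℤ)) / N) :=
  ifd_transport_operator_dft_form_general N hN w hw u hu hW G H hG hH
end

section
/- Fix k ∈ ℝ and Δx₀ > 0. Let Φ : ℝ → ℝ≥0 with Φ(k) > 0, let Ū : ℝ → ℂ, and let B̂ : ℝ → ℂ be bounded, continuous at 0, with B̂(0) ≠ 0. Assume there exist Q > 0 and monotone nonincreasing functions g, h : [0,∞) → [0,∞) with g(t) → 0 and h(t) → 0 as t → ∞ such that |Ū(q) Φ(q)| ≤ g(|q|) and Φ(q) ≤ h(|q|) whenever |q| ≥ Q, and that ∑_{n≥1} ( g(2πn/Δx₀ − |k| − 1) + h(2πn/Δx₀ − |k| − 1) ) < ∞ (the sum taken over n with 2πn/Δx₀ > |k| + Q + 1). Then, as λ → ∞ through the positive integers, the ratio [ ∑_{n∈ℤ} Ū(k + 2πnλ/Δx₀) Φ(k + 2πnλ/Δx₀) |B̂(k/λ + 2πn/Δx₀)|² ] / [ ∑_{m∈ℤ} Φ(k + 2πmλ/Δx₀) |B̂(k/λ + 2πm/Δx₀)|² ] converges to Ū(k). -/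
open Filter Topology

/-!
Only the `n = 0` term of either series survives as `λ → ∞`: it tends to `Ū(k) Φ(k) |B̂(0)|²`,
resp. `Φ(k) |B̂(0)|²`, by continuity of `B̂` at `0`. For `n ≠ 0` the sample point
`k + 2πnλ/Δx₀` escapes to infinity, so each aliased term tends to `0`, and once
`2πλ/Δx₀ ≥ |k| + Q` all of them are dominated, uniformly in `λ`, by
`sup |B̂|² · (g + h)(max Q (2π|n|/Δx₀ - |k| - 1))`, which is summable over `ℤ`.
Tannery's theorem gives the limits of both series, and the quotient of the limits is `Ū(k)`.
-/

theorem tendsto_tsum_of_dominated_convergence_pi_single {α β G : Type*} {l : Filter α}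
    [NormedAddCommGroup G] [CompleteSpace G] {f : α → β → G} {b : β} {L : G}
    {bound : β → ℝ} (h_sum : Summable bound) (hb : Tendsto (f · b) l (𝓝 L))
    (hab : ∀ i ≠ b, Tendsto (f · i) l (𝓝 0))
    (h_bound : ∀ᶠ a in l, ∀ i ≠ b, ‖f a i‖ ≤ bound i) :
    Tendsto (∑' i, f · i) l (𝓝 L) := by
  classical
  have hb_bound : ∀ᶠ a in l, ‖f a b‖ ≤ ‖L‖ + 1 :=
    hb.norm.eventually (ge_mem_nhds (lt_add_one _))
  rw [← tsum_pi_single b L]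
  refine tendsto_tsum_of_dominated_convergence (h_sum.update b (‖L‖ + 1)) (fun i => ?_) ?_
  · rcases eq_or_ne i b with rfl | hi
    · simpa using hb
    · simpa [hi] using hab i hi
  · filter_upwards [h_bound, hb_bound] with a ha hab i
    rcases eq_or_ne i b with rfl | hi
    · simpa using hab
    · simpa [hi] using ha i hi

theorem summable_int_max_of_summable_nat_ite {G : ℝ → ℝ} {a b Q : ℝ} (ha : 0 < a)
    (hsum : Summable fun n : ℕ => if b + Q < a * (n + 1) then G (a * (n + 1) - b) else 0) :
    Summable fun n : ℤ => G (max Q (a * |(n : ℝ)| - b)) := by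
  have hlarge : ∀ᶠ n : ℕ in cofinite, b + Q < a * (n + 1) := by
    rw [Nat.cofinite_eq_atTop]
    obtain ⟨N, hN⟩ := exists_nat_gt ((b + Q) / a)
    filter_upwards [eventually_ge_atTop N] with n hn
    rw [div_lt_iff₀ ha] at hN
    have : (N : ℝ) ≤ n := by exact_mod_cast hn
    nlinarith
  have hsucc : Summable fun n : ℕ => G (max Q (a * |((n + 1 : ℕ) : ℝ)| - b)) := by
    refine hsum.congr_cofinite (hlarge.mono fun n hn => ?_)
    dsimp only
    rw [if_pos hn, Nat.abs_cast, Nat.cast_succ, max_eq_right (by linarith)]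
  have hnat : Summable fun n : ℕ => G (max Q (a * |((n : ℤ) : ℝ)| - b)) :=
    (summable_nat_add_iff 1).mp (by simpa using hsucc)
  exact .of_nat_of_neg hnat (by simpa using hnat)

theorem sub_abs_le_abs_add_mul (k : ℝ) {c : ℝ} (hc : 0 ≤ c) (n : ℤ) (lam : ℕ) :
    c * |(n : ℝ)| * lam - |k| ≤ |k + c * (n * lam)| := by
  have h := abs_add' (c * (n * lam)) k
  rw [abs_mul, abs_mul, abs_of_nonneg hc, Nat.abs_cast] at h
  linarith

theorem max_le_abs_add_mul {c k Q : ℝ} (hc : 0 < c) {n : ℤ} (hn : n ≠ 0) {lam : ℕ}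
    (hlam : 1 ≤ lam) (hQ : |k| + Q ≤ c * lam) :
    max Q (c * |(n : ℝ)| - |k| - 1) ≤ |k + c * (n * lam)| := by
  have hn1 : (1 : ℝ) ≤ |(n : ℝ)| := by exact_mod_cast Int.one_le_abs hn
  have hlam1 : (1 : ℝ) ≤ lam := by exact_mod_cast hlam
  have h := sub_abs_le_abs_add_mul k hc.le n lam
  refine max_le ?_ ?_
  · nlinarith [mul_le_mul_of_nonneg_left hn1 (mul_nonneg hc.le (by positivity : (0 : ℝ) ≤ lam))]
  · nlinarith [mul_le_mul_of_nonneg_left hlam1 (mul_nonneg hc.le (abs_nonneg (n : ℝ)))]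

section AliasedModes

variable {R : Type*} [NormedRing R] {φ w : ℝ → R} {G : ℝ → ℝ} {c k Q C : ℝ}

theorem eventually_norm_aliased_mode_le (hc : 0 < c) (hQ : 0 < Q) (hw : ∀ y, ‖w y‖ ≤ C)
    (hGanti : AntitoneOn G (Set.Ici 0)) (hφ : ∀ q, Q ≤ |q| → ‖φ q‖ ≤ G |q|) :
    ∀ᶠ lam : ℕ in atTop, ∀ n : ℤ, n ≠ 0 →
      ‖φ (k + c * (n * lam)) * w (k / lam + c * n)‖ ≤ G (max Q (c * |(n : ℝ)| - |k| - 1)) * C := by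
  obtain ⟨N, hN⟩ := exists_nat_ge ((|k| + Q) / c)
  filter_upwards [eventually_ge_atTop (max N 1)] with lam hlam n hn
  have hcl : |k| + Q ≤ c * lam := by
    rw [div_le_iff₀ hc] at hN
    have : (N : ℝ) ≤ lam := by exact_mod_cast le_of_max_le_left hlam
    nlinarith
  have hM := max_le_abs_add_mul hc hn (le_of_max_le_right hlam) hcl
  have hQM : Q ≤ max Q (c * |(n : ℝ)| - |k| - 1) := le_max_left _ _
  calc ‖φ (k + c * (n * lam)) * w (k / lam + c * n)‖
      ≤ ‖φ (k + c * (n * lam))‖ * C :=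
        (norm_mul_le _ _).trans (mul_le_mul_of_nonneg_left (hw _) (norm_nonneg _))
    _ ≤ G (max Q (c * |(n : ℝ)| - |k| - 1)) * C := by
        refine mul_le_mul_of_nonneg_right ?_ ((norm_nonneg _).trans (hw 0))
        exact (hφ _ (hQM.trans hM)).trans
          (hGanti (hQ.le.trans hQM) (hQ.le.trans (hQM.trans hM)) hM)

theorem tendsto_aliased_mode_nhds_zero (hc : 0 < c) (hw : ∀ y, ‖w y‖ ≤ C)
    (hGtend : Tendsto G atTop (𝓝 0)) (hφ : ∀ q, Q ≤ |q| → ‖φ q‖ ≤ G |q|) {n : ℤ} (hn : n ≠ 0) :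
    Tendsto (fun lam : ℕ => φ (k + c * (n * lam)) * w (k / lam + c * n)) atTop (𝓝 0) := by
  have hcn : 0 < c * |(n : ℝ)| := mul_pos hc (by positivity)
  have hx : Tendsto (fun lam : ℕ => |k + c * (n * lam)|) atTop atTop :=
    tendsto_atTop_mono (sub_abs_le_abs_add_mul k hc.le n) <|
      tendsto_atTop_add_const_right _ _ (tendsto_natCast_atTop_atTop.const_mul_atTop hcn)
  refine squeeze_zero_norm' ?_ (by simpa using (hGtend.comp hx).mul_const C)
  filter_upwards [hx.eventually_ge_atTop Q] with lam hlam
  exact (norm_mul_le _ _).trans (mul_le_mul (hφ _ hlam) (hw _) (norm_nonneg _)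
    ((norm_nonneg _).trans (hφ _ hlam)))

theorem tendsto_central_mode (hw0 : ContinuousAt w 0) :
    Tendsto (fun lam : ℕ => φ (k + c * ((0 : ℤ) * lam)) * w (k / lam + c * (0 : ℤ))) atTop
      (𝓝 (φ k * w 0)) := by
  simpa using tendsto_const_nhds.mul (hw0.tendsto.comp (tendsto_const_div_atTop_nhds_zero_nat k))

theorem tendsto_tsum_aliased_modes [CompleteSpace R] (hc : 0 < c) (hQ : 0 < Q)
    (hw : ∃ C, ∀ y, ‖w y‖ ≤ C) (hw0 : ContinuousAt w 0)
    (hGanti : AntitoneOn G (Set.Ici 0)) (hGtend : Tendsto G atTop (𝓝 0))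
    (hφ : ∀ q, Q ≤ |q| → ‖φ q‖ ≤ G |q|)
    (hsum : Summable fun n : ℕ =>
      if |k| + Q + 1 < c * (n + 1) then G (c * (n + 1) - |k| - 1) else 0) :
    Tendsto (fun lam : ℕ => ∑' n : ℤ, φ (k + c * (n * lam)) * w (k / lam + c * n)) atTop
      (𝓝 (φ k * w 0)) := by
  obtain ⟨C, hC⟩ := hw
  have hmajorant : Summable fun n : ℤ => G (max Q (c * |(n : ℝ)| - (|k| + 1))) :=
    summable_int_max_of_summable_nat_ite hc (by simpa only [add_right_comm, sub_sub] using hsum)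
  exact tendsto_tsum_of_dominated_convergence_pi_single (b := 0) (hmajorant.mul_right C)
    (tendsto_central_mode hw0) (fun n hn => tendsto_aliased_mode_nhds_zero hc hC hGtend hφ hn)
    (by simpa only [sub_sub] using eventually_norm_aliased_mode_le hc hQ hC hGanti hφ)

end AliasedModes

/-- **Consistency of translation-invariant IFD schemes.**
Fix a momentum `k`.  If the prior `Φ` and the product `Ū·Φ` decay at large momenta
(dominated by monotone functions `h`, `g` tending to zero, with a summability condition
over the Brillouin zones), and the bin Fourier transform `B̂` is bounded, continuous at
`0` with `B̂(0) ≠ 0`, then the transport eigenvalue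
`T_λ(k) = [∑_n Ū(k+2πnλ/Δx₀) Φ(k+2πnλ/Δx₀) |B̂(k/λ+2πn/Δx₀)|²]
        / [∑_m Φ(k+2πmλ/Δx₀) |B̂(k/λ+2πm/Δx₀)|²]`
converges to `Ū(k)` as the resolution `λ → ∞` through the positive integers. -/
theorem ifd_translation_invariant_consistency
    (k : ℝ) (Δx₀ : ℝ) (hΔx₀ : 0 < Δx₀)
    (Φ : ℝ → ℝ) (hΦ0 : ∀ q, 0 ≤ Φ q) (hΦk : 0 < Φ k)
    (Ubar : ℝ → ℂ)
    (Bhat : ℝ → ℂ) (hBbdd : ∃ C : ℝ, ∀ q, ‖Bhat q‖ ≤ C)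
    (hBcont : ContinuousAt Bhat 0) (hB0 : Bhat 0 ≠ 0)
    (Q : ℝ) (hQ : 0 < Q)
    (g h : ℝ → ℝ)
    (hg0 : ∀ t, 0 ≤ t → 0 ≤ g t) (hh0 : ∀ t, 0 ≤ t → 0 ≤ h t)
    (hganti : AntitoneOn g (Set.Ici (0 : ℝ))) (hhanti : AntitoneOn h (Set.Ici (0 : ℝ)))
    (hgtend : Tendsto g atTop (nhds 0)) (hhtend : Tendsto h atTop (nhds 0))
    (hgbound : ∀ q : ℝ, Q ≤ |q| → ‖Ubar q * (Φ q : ℂ)‖ ≤ g |q|)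
    (hhbound : ∀ q : ℝ, Q ≤ |q| → Φ q ≤ h |q|)
    (hsum : Summable fun n : ℕ =>
      if |k| + Q + 1 < 2 * Real.pi * (n + 1) / Δx₀ then
        g (2 * Real.pi * (n + 1) / Δx₀ - |k| - 1) +
          h (2 * Real.pi * (n + 1) / Δx₀ - |k| - 1)
      else 0) :
    Tendsto
      (fun lam : ℕ =>
        (∑' n : ℤ, Ubar (k + 2 * Real.pi * n * lam / Δx₀) *
            (Φ (k + 2 * Real.pi * n * lam / Δx₀) : ℂ) *
            ((‖Bhat (k / lam + 2 * Real.pi * n / Δx₀)‖ ^ 2 : ℝ) : ℂ)) /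
          (∑' m : ℤ, ((Φ (k + 2 * Real.pi * m * lam / Δx₀) *
            ‖Bhat (k / lam + 2 * Real.pi * m / Δx₀)‖ ^ 2 : ℝ) : ℂ)))
      atTop (nhds (Ubar k)) := by
  set c := 2 * Real.pi / Δx₀
  have hc : 0 < c := by positivity
  have hscale : ∀ x : ℝ, 2 * Real.pi * x / Δx₀ = c * x := fun x => by ring
  have hscale₂ : ∀ x y : ℝ, 2 * Real.pi * x * y / Δx₀ = c * (x * y) := fun x y => by ring
  set w : ℝ → ℂ := fun y => ((‖Bhat y‖ ^ 2 : ℝ) : ℂ)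
  have hw : ∃ C, ∀ y, ‖w y‖ ≤ C := by
    obtain ⟨C, hC⟩ := hBbdd
    exact ⟨C ^ 2, fun y => by simpa [w] using pow_le_pow_left₀ (norm_nonneg _) (hC y) 2⟩
  have hw0 : ContinuousAt w 0 := Complex.continuous_ofReal.continuousAt.comp (hBcont.norm.pow 2)
  have hlim_ne : (Φ k : ℂ) * w 0 ≠ 0 :=
    mul_ne_zero (Complex.ofReal_ne_zero.mpr hΦk.ne') (by simpa [w] using hB0)
  have hG : AntitoneOn (fun t => g t + h t) (Set.Ici 0) := hganti.add hhanti
  have hGtend : Tendsto (fun t => g t + h t) atTop (𝓝 0) := by simpa using hgtend.add hhtend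
  have hGsum : Summable fun n : ℕ => if |k| + Q + 1 < c * (n + 1) then
      g (c * (n + 1) - |k| - 1) + h (c * (n + 1) - |k| - 1) else 0 := by
    simpa only [hscale] using hsum
  have hnum := tendsto_tsum_aliased_modes (φ := fun q => Ubar q * Φ q) hc hQ hw hw0 hG hGtend
    (fun q hq => (hgbound q hq).trans (le_add_of_nonneg_right (hh0 _ (abs_nonneg q)))) hGsum
  have hden := tendsto_tsum_aliased_modes (φ := fun q => (Φ q : ℂ)) hc hQ hw hw0 hG hGtend
    (fun q hq => by
      rw [Complex.norm_real, Real.norm_of_nonneg (hΦ0 q)]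
      exact (hhbound q hq).trans (le_add_of_nonneg_left (hg0 _ (abs_nonneg q)))) hGsum
  have hratio := hnum.div hden hlim_ne
  rw [mul_assoc, mul_div_cancel_right₀ _ hlim_ne] at hratio
  simp only [hscale, hscale₂, Complex.ofReal_mul]
  exact hratio
end

section
/- Let Φ be a positive-definite n×n real matrix, N a positive-definite m×m real matrix, and R an m×n real matrix of rank m (i.e. R is surjective). Set D = (Φ⁻¹ + Rᵀ N⁻¹ R)⁻¹ and W = D Rᵀ N⁻¹. Then W has trivial kernel, R W is invertible, and (Wᵀ D⁻¹ W)⁻¹ Wᵀ D⁻¹ = (R W)⁻¹ R. -/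
/-!
Since `D` and `N` are symmetric, `Wᵀ D⁻¹ = N⁻¹ R`, so the left side is
`(N⁻¹ R W)⁻¹ N⁻¹ R = (R W)⁻¹ N N⁻¹ R = (R W)⁻¹ R`. The analytic input is that `R W = (R D Rᵀ) N⁻¹`
is invertible: `D` is positive definite, being the inverse of the positive definite precision
`Φ⁻¹ + Rᵀ N⁻¹ R`, and a surjective `R` has injective `vecMul`, so `R D Rᵀ` is positive definite.
Then `(R W)⁻¹ R` is a left inverse of `W`, which gives the trivial kernel.
-/

open Matrix

namespace Matrix

variable {m n K : Type*} [Fintype m] [Fintype n]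

theorem vecMul_injective_of_mulVec_surjective [DecidableEq m] [Semiring K] {A : Matrix m n K}
    (hA : Function.Surjective A.mulVec) : Function.Injective A.vecMul := by
  obtain ⟨B, hAB⟩ := mulVec_surjective_iff_exists_right_inverse.mp hA
  intro x y hxy
  simpa only [vecMul_vecMul, hAB, vecMul_one] using congrArg (· ᵥ* B) hxy

theorem eq_zero_of_isUnit_det_mul_of_mulVec_eq_zero [DecidableEq m] [CommRing K]
    {A : Matrix m n K} {B : Matrix n m K} (hAB : IsUnit (A * B).det) {x : m → K}
    (hx : B *ᵥ x = 0) : x = 0 := by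
  calc x = (A * B)⁻¹ *ᵥ (A *ᵥ (B *ᵥ x)) := by
        rw [mulVec_mulVec, mulVec_mulVec, Matrix.mul_assoc, nonsing_inv_mul _ hAB, one_mulVec]
    _ = 0 := by rw [hx, mulVec_zero, mulVec_zero]

theorem inv_mul_mul_mul_eq_inv_mul [DecidableEq m] [CommRing K] {S : Matrix m m K}
    (hS : IsUnit S.det) (R : Matrix m n K) (W : Matrix n m K) :
    (S * R * W)⁻¹ * (S * R) = (R * W)⁻¹ * R := by
  rw [Matrix.mul_assoc S, mul_inv_rev, Matrix.mul_assoc, nonsing_inv_mul_cancel_left _ _ hS]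

theorem mul_transpose_mul_inv_transpose_mul_inv [DecidableEq m] [DecidableEq n] [CommRing K]
    {D : Matrix n n K} {N : Matrix m m K} (hDt : Dᵀ = D) (hNt : Nᵀ = N) (hD : IsUnit D.det)
    (R : Matrix m n K) :
    (D * Rᵀ * N⁻¹)ᵀ * D⁻¹ = N⁻¹ * R := by
  rw [transpose_mul, transpose_mul, transpose_transpose, hDt, transpose_nonsing_inv, hNt,
    ← Matrix.mul_assoc, mul_nonsing_inv_cancel_right _ _ hD]

theorem posDef_inv_add_transpose_mul_inv_mul [DecidableEq m] [DecidableEq n]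
    {Φ : Matrix n n ℝ} (hΦ : Φ.PosDef) {N : Matrix m m ℝ} (hN : N.PosDef) (R : Matrix m n ℝ) :
    (Φ⁻¹ + Rᵀ * N⁻¹ * R).PosDef := by
  simpa only [conjTranspose_eq_transpose_of_trivial] using
    hΦ.inv.add_posSemidef (hN.inv.posSemidef.conjTranspose_mul_mul_same R)

end Matrix

/-- **Simplification of the IFD data update.**
For the Wiener filter `W = D Rᵀ N⁻¹` with `D = (Φ⁻¹ + Rᵀ N⁻¹ R)⁻¹`, prior covariance
`Φ` positive definite, noise covariance `N` positive definite and surjective response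
`R`, the filter `W` has trivial kernel, `R W` is invertible, and
`(Wᵀ D⁻¹ W)⁻¹ Wᵀ D⁻¹ = (R W)⁻¹ R`. -/
theorem ifd_update_operator_simplification
    {n m : ℕ}
    (Φ : Matrix (Fin n) (Fin n) ℝ) (hΦ : Φ.PosDef)
    (N : Matrix (Fin m) (Fin m) ℝ) (hN : N.PosDef)
    (R : Matrix (Fin m) (Fin n) ℝ)
    (hR : Function.Surjective fun x : Fin n → ℝ => R *ᵥ x)
    (D : Matrix (Fin n) (Fin n) ℝ) (hD : D = (Φ⁻¹ + Rᵀ * N⁻¹ * R)⁻¹)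
    (W : Matrix (Fin n) (Fin m) ℝ) (hW : W = D * Rᵀ * N⁻¹) :
    (∀ x : Fin m → ℝ, W *ᵥ x = 0 → x = 0) ∧ IsUnit (R * W).det ∧
      (Wᵀ * D⁻¹ * W)⁻¹ * Wᵀ * D⁻¹ = (R * W)⁻¹ * R := by
  have hDpd : D.PosDef := hD ▸ (posDef_inv_add_transpose_mul_inv_mul hΦ hN R).inv
  have hG : (R * D * Rᵀ).PosDef := by
    simpa only [conjTranspose_eq_transpose_of_trivial] using
      hDpd.mul_mul_conjTranspose_same (vecMul_injective_of_mulVec_surjective hR)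
  have hRW : IsUnit (R * W).det := by
    rw [hW, ← Matrix.mul_assoc, ← Matrix.mul_assoc, det_mul]
    exact hG.det_pos.ne'.isUnit.mul hN.inv.det_pos.ne'.isUnit
  have hWtD : Wᵀ * D⁻¹ = N⁻¹ * R := hW ▸
    mul_transpose_mul_inv_transpose_mul_inv (isHermitian_iff_isSymm.mp hDpd.isHermitian).eq
      (isHermitian_iff_isSymm.mp hN.isHermitian).eq hDpd.det_pos.ne'.isUnit R
  refine ⟨fun _ => eq_zero_of_isUnit_det_mul_of_mulVec_eq_zero hRW, hRW, ?_⟩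
  rw [Matrix.mul_assoc _ Wᵀ, hWtD]
  exact inv_mul_mul_mul_eq_inv_mul hN.inv.det_pos.ne'.isUnit R W
end

section
/- Fix k ∈ ℝ, Δx₀ > 0, an integer p ≥ 1, and reals α > 0 and β ≥ 0 with α − pβ > 1. Let Φ : ℝ → ℝ≥0, L : ℝ → ℂ, and B̂ : ℝ → ℂ, and suppose there are constants C₁, C₂, C₃ > 0 and Q > 0 such that Φ(q) ≤ C₁ |q|^{−α} for all |q| ≥ Q, |L(q)| ≤ C₂ |q|^{β} for all q, and |B̂(q)| ≤ C₃ for all q. Then there exist a constant C > 0 and λ₀ ≥ 1 such that for every integer λ ≥ λ₀, | ∑_{n∈ℤ, n≠0} L(k + 2πnλ/Δx₀)^p · Φ(k + 2πnλ/Δx₀) · |B̂(k/λ + 2πn/Δx₀)|² | ≤ C · λ^{pβ − α}. -/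
open Filter

set_option maxHeartbeats 1000000 in
/-- **Error scaling of translation-invariant IFD schemes.**
If the prior power spectrum decays like `|q|^{−α}`, the symbol `L` of the generator
grows at most like `|q|^{β}`, the bin Fourier transform is bounded, and `α − pβ > 1`,
then the aliasing sum over the nonzero Brillouin zones of the order-`p` term is
`O(λ^{pβ−α})` as the resolution factor `λ → ∞`, i.e. the spatial error of that term
is `O(Δx^{α−pβ})`. -/
theorem ifd_aliasing_error_scaling
    (k : ℝ) (Δx₀ : ℝ) (hΔx₀ : 0 < Δx₀)
    (p : ℕ) (hp : 1 ≤ p) (α β : ℝ) (hα : 0 < α) (hβ : 0 ≤ β)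
    (hαβ : 1 < α - (p : ℝ) * β)
    (Φ : ℝ → ℝ) (hΦ0 : ∀ q, 0 ≤ Φ q)
    (L : ℝ → ℂ) (Bhat : ℝ → ℂ)
    (C₁ C₂ C₃ Q : ℝ) (hC₁ : 0 < C₁) (hC₂ : 0 < C₂) (hC₃ : 0 < C₃) (hQ : 0 < Q)
    (hΦ : ∀ q : ℝ, Q ≤ |q| → Φ q ≤ C₁ * |q| ^ (-α))
    (hL : ∀ q : ℝ, ‖L q‖ ≤ C₂ * |q| ^ β)
    (hB : ∀ q : ℝ, ‖Bhat q‖ ≤ C₃) :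
    ∃ C : ℝ, 0 < C ∧ ∃ lam₀ : ℕ, 1 ≤ lam₀ ∧ ∀ lam : ℕ, lam₀ ≤ lam →
      ‖∑' n : {n : ℤ // n ≠ 0},
          (L (k + 2 * Real.pi * (n : ℤ) * lam / Δx₀)) ^ p *
            (Φ (k + 2 * Real.pi * (n : ℤ) * lam / Δx₀) : ℂ) *
            ((‖Bhat (k / lam + 2 * Real.pi * (n : ℤ) / Δx₀)‖ ^ 2 : ℝ) : ℂ)‖ ≤
        C * (lam : ℝ) ^ ((p : ℝ) * β - α) := by
  have hπ : (0:ℝ) < Real.pi := Real.pi_pos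
  set s : ℝ := (p : ℝ) * β - α with hs
  have hs_neg : s < -1 := by simp only [hs]; linarith
  set c : ℝ := Real.pi / Δx₀ with hc
  have hc0 : 0 < c := div_pos hπ hΔx₀
  -- summability of |n|^s over ℤ
  have hsum : Summable fun n : ℤ => |(n:ℝ)| ^ s := by
    have := Real.summable_abs_int_rpow (b := -s) (by linarith)
    simpa using this
  have hsumS : Summable fun n : {n : ℤ // n ≠ 0} => |((n : ℤ) : ℝ)| ^ s :=
    hsum.subtype _
  set S : ℝ := ∑' n : {n : ℤ // n ≠ 0}, |((n : ℤ) : ℝ)| ^ s with hS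
  have hS0 : 0 ≤ S := tsum_nonneg fun n => Real.rpow_nonneg (abs_nonneg _) _
  set K : ℝ := C₁ * C₂ ^ p * C₃ ^ 2 * c ^ s with hK
  have hK0 : 0 < K := by positivity
  refine ⟨K * S + 1, by positivity, max 1 ⌈(max |k| Q) * Δx₀ / Real.pi⌉₊,
    le_max_left _ _, fun lam hlam => ?_⟩
  have hlam1 : 1 ≤ lam := le_trans (le_max_left _ _) hlam
  have hlamR : (1:ℝ) ≤ (lam : ℝ) := by exact_mod_cast hlam1
  have hlam0 : (0:ℝ) < lam := by linarith
  have hclam : max |k| Q ≤ c * lam := by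
    have h1 : ⌈(max |k| Q) * Δx₀ / Real.pi⌉₊ ≤ lam := le_trans (le_max_right _ _) hlam
    have h2 : (max |k| Q) * Δx₀ / Real.pi ≤ (lam : ℝ) := by
      exact_mod_cast Nat.ceil_le.mp h1
    rw [div_le_iff₀ hπ] at h2
    rw [hc, div_mul_eq_mul_div, le_div_iff₀ hΔx₀]
    linarith [h2]
  -- per-term bound
  have key : ∀ n : {n : ℤ // n ≠ 0},
      ‖(L (k + 2 * Real.pi * ((n : ℤ)) * lam / Δx₀)) ^ p *
            (Φ (k + 2 * Real.pi * ((n : ℤ)) * lam / Δx₀) : ℂ) *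
            ((‖Bhat (k / lam + 2 * Real.pi * ((n : ℤ)) / Δx₀)‖ ^ 2 : ℝ) : ℂ)‖ ≤
        K * (lam : ℝ) ^ s * |((n : ℤ) : ℝ)| ^ s := by
    rintro ⟨n, hn⟩
    set q : ℝ := k + 2 * Real.pi * (n : ℝ) * lam / Δx₀ with hq
    have hn1 : (1:ℝ) ≤ |(n:ℝ)| := by
      have : (1:ℤ) ≤ |n| := Int.one_le_abs hn
      exact_mod_cast (by exact_mod_cast this : (1:ℝ) ≤ |(n:ℤ)|)
    have habs : |2 * Real.pi * (n : ℝ) * lam / Δx₀| = 2 * c * lam * |(n:ℝ)| := by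
      rw [abs_div, abs_of_pos hΔx₀, abs_mul, abs_mul, abs_of_pos hlam0,
        abs_of_pos (by linarith : (0:ℝ) < 2 * Real.pi)]
      rw [hc]; ring
    have hclamn : c * lam * |(n:ℝ)| ≤ |q| := by
      have h1 : |q| ≥ |2 * Real.pi * (n : ℝ) * lam / Δx₀| - |k| := by
        have := abs_sub_abs_le_abs_sub (2 * Real.pi * (n : ℝ) * lam / Δx₀) (-k)
        simp only [abs_neg, sub_neg_eq_add] at this
        have h2 : 2 * Real.pi * (n : ℝ) * lam / Δx₀ + k = q := by rw [hq]; ring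
        rw [h2] at this
        linarith
      have hk' : |k| ≤ c * lam := le_trans (le_max_left _ _) hclam
      have h3 : c * lam ≤ c * lam * |(n:ℝ)| := by
        nlinarith [mul_pos hc0 hlam0]
      rw [habs] at h1
      nlinarith
    have hqpos : 0 < c * lam * |(n:ℝ)| := by positivity
    have hQq : Q ≤ |q| := by
      have : Q ≤ c * lam := le_trans (le_max_right _ _) hclam
      nlinarith [mul_pos hc0 hlam0]
    -- norm computation
    rw [norm_mul, norm_mul, norm_pow, Complex.norm_real, Complex.norm_real,
      Real.norm_eq_abs, Real.norm_eq_abs, abs_of_nonneg (hΦ0 _),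
      abs_of_nonneg (sq_nonneg _)]
    have hLb : ‖L q‖ ^ p ≤ C₂ ^ p * |q| ^ (β * (p:ℝ)) := by
      have h1 : ‖L q‖ ^ p ≤ (C₂ * |q| ^ β) ^ p :=
        pow_le_pow_left₀ (norm_nonneg _) (hL q) p
      have h2 : (C₂ * |q| ^ β) ^ p = C₂ ^ p * (|q| ^ β) ^ p := mul_pow _ _ _
      have h3 : (|q| ^ β) ^ p = |q| ^ (β * (p:ℝ)) := by
        rw [← Real.rpow_natCast (|q| ^ β) p, ← Real.rpow_mul (abs_nonneg _)]
      rw [h2, h3] at h1; exact h1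
    have hBb : ‖Bhat (k / lam + 2 * Real.pi * (n : ℝ) / Δx₀)‖ ^ 2 ≤ C₃ ^ 2 :=
      pow_le_pow_left₀ (norm_nonneg _) (hB _) 2
    have hΦb : Φ q ≤ C₁ * |q| ^ (-α) := hΦ q hQq
    have step : ‖L q‖ ^ p * Φ q * ‖Bhat (k / lam + 2 * Real.pi * (n : ℝ) / Δx₀)‖ ^ 2 ≤
        (C₂ ^ p * |q| ^ (β * (p:ℝ))) * (C₁ * |q| ^ (-α)) * C₃ ^ 2 := by
      have h1 : (0:ℝ) ≤ ‖L q‖ ^ p := by positivity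
      have h2 : (0:ℝ) ≤ Φ q := hΦ0 _
      have h3 : (0:ℝ) ≤ ‖Bhat (k / lam + 2 * Real.pi * (n : ℝ) / Δx₀)‖ ^ 2 := by positivity
      have h4 : (0:ℝ) ≤ C₂ ^ p * |q| ^ (β * (p:ℝ)) := by positivity
      have h5 : (0:ℝ) ≤ C₁ * |q| ^ (-α) := by positivity
      exact mul_le_mul (mul_le_mul hLb hΦb h2 h4) hBb h3 (by positivity)
    have hqpos' : 0 < |q| := lt_of_lt_of_le hqpos hclamn
    have hcomb : |q| ^ (β * (p:ℝ)) * |q| ^ (-α) = |q| ^ s := by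
      rw [← Real.rpow_add hqpos']; congr 1; rw [hs]; ring
    have hqs : (C₂ ^ p * |q| ^ (β * (p:ℝ))) * (C₁ * |q| ^ (-α)) * C₃ ^ 2 =
        C₁ * C₂ ^ p * C₃ ^ 2 * |q| ^ s := by
      rw [← hcomb]; ring
    have hqpow : |q| ^ s ≤ (c * lam * |(n:ℝ)|) ^ s :=
      Real.rpow_le_rpow_of_nonpos hqpos hclamn (by linarith)
    have hsplit : (c * lam * |(n:ℝ)|) ^ s = c ^ s * (lam:ℝ) ^ s * |(n:ℝ)| ^ s := by
      rw [Real.mul_rpow (by positivity) (abs_nonneg _),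
        Real.mul_rpow (le_of_lt hc0) (le_of_lt hlam0)]
    calc ‖L q‖ ^ p * Φ q * ‖Bhat (k / lam + 2 * Real.pi * (n : ℝ) / Δx₀)‖ ^ 2
        ≤ C₁ * C₂ ^ p * C₃ ^ 2 * |q| ^ s := by rw [← hqs]; exact step
      _ ≤ C₁ * C₂ ^ p * C₃ ^ 2 * (c ^ s * (lam:ℝ) ^ s * |(n:ℝ)| ^ s) := by
          rw [← hsplit]; exact mul_le_mul_of_nonneg_left hqpow (by positivity)
      _ = K * (lam : ℝ) ^ s * |(n:ℝ)| ^ s := by rw [hK]; ring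
  -- sum the bounds
  have hg : HasSum (fun n : {n : ℤ // n ≠ 0} => K * (lam : ℝ) ^ s * |((n : ℤ) : ℝ)| ^ s)
      (K * (lam : ℝ) ^ s * S) := by
    simpa [hS] using (hsumS.hasSum.mul_left (K * (lam : ℝ) ^ s))
  have hb := tsum_of_norm_bounded hg key
  have hlams : (0:ℝ) < (lam : ℝ) ^ s := Real.rpow_pos_of_pos hlam0 _
  refine le_trans hb ?_
  rw [mul_right_comm]
  exact mul_le_mul_of_nonneg_right (by linarith) (le_of_lt hlams)
end
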